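/- arXiv:2009.14557 — 2 statements merged into one kernel-verified Lean document; each statement's English description precedes it below -/
import Mathlib

section
/- Let I ⊆ ℝ̄[x₀,…,xₙ] be a homogeneous tropical ideal and ≺ a monomial term order. Then the Hilbert function of the monomial initial ideal in_≺(I) equals the Hilbert function of I: for all d ≥ 0, H_{in_≺(I)}(d) = H_I(d). -/
open scoped Classical
open Filter

noncomputable section

namespace TropStmt

/-- The tropical semiring of coefficients: `ℝ ∪ {∞}`, with `⊕ = min` and `⊙ = +`. -/
abbrev TR : Type := WithTop ℝ

/-- A tropical polynomial with monomials indexed by `M`, given by its coefficient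
function.  The coefficient `⊤ = ∞` means the monomial does not occur. -/
abbrev TPoly (M : Type) : Type := M → TR

section Generic

variable {M : Type} [AddCommMonoid M]

/-- The support of a tropical polynomial: monomials with coefficient `≠ ∞`. -/
def psupp (f : TPoly M) : Set M := {u | f u ≠ ⊤}

/-- The zero tropical polynomial (all coefficients `∞`). -/
def zeroPoly (M : Type) : TPoly M := fun _ => ⊤

/-- Tropical addition of polynomials: coefficientwise minimum. -/
def tadd (f g : TPoly M) : TPoly M := fun u => min (f u) (g u)

/-- Tropical multiplication of a polynomial `f` by the term `c ⊙ x^v`. -/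
def tmulTerm (c : TR) (v : M) (f : TPoly M) : TPoly M :=
  fun u => if h : ∃ t : M, t + v = u then c + f h.choose else ⊤

/-- An ideal in the semiring of tropical polynomials (with finite supports):
closed under tropical addition and multiplication by terms. -/
def IsTIdeal (I : Set (TPoly M)) : Prop :=
  (∀ f ∈ I, (psupp f).Finite) ∧ zeroPoly M ∈ I ∧
    (∀ f ∈ I, ∀ g ∈ I, tadd f g ∈ I) ∧
    ∀ f ∈ I, ∀ (c : TR) (v : M), tmulTerm c v f ∈ I

/-- `Elim h f g u`: `h` is an elimination of the monomial `x^u` from `f` and `g`: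
`[h]_u = ∞`, `[h]_v ≥ min([f]_v, [g]_v)` for all `v`, with equality whenever
`[f]_v ≠ [g]_v`. -/
def Elim (h f g : TPoly M) (u : M) : Prop :=
  h u = ⊤ ∧ ∀ v : M, min (f v) (g v) ≤ h v ∧ (f v ≠ g v → h v = min (f v) (g v))

/-- A tropical ideal: an ideal satisfying the monomial elimination axiom. -/
def IsTropIdeal (I : Set (TPoly M)) : Prop :=
  IsTIdeal I ∧
    ∀ f ∈ I, ∀ g ∈ I, ∀ u : M, f u = g u → f u ≠ ⊤ → ∃ h ∈ I, Elim h f g u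

/-- The ideal generated by a set of tropical polynomials. -/
def idealGen (S : Set (TPoly M)) : Set (TPoly M) := ⋂₀ {I | IsTIdeal I ∧ S ⊆ I}

/-- The monomial `x^u` (as a tropical polynomial, with coefficient `0`). -/
def monPoly (u : M) : TPoly M := fun v => if v = u then (0 : TR) else ⊤

end Generic

section Vars

variable {n m : ℕ}

/-- Embedding of polynomials into Laurent polynomials. -/
def embed (f : TPoly (Fin n → ℕ)) : TPoly (Fin n → ℤ) :=
  fun u => if h : ∃ v : Fin n → ℕ, (fun i => ((v i : ℤ))) = u then f h.choose else ⊤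

/-- Multiplication of a Laurent polynomial by the Laurent monomial `x^v`. -/
def shiftZ (v : Fin n → ℤ) (f : TPoly (Fin n → ℤ)) : TPoly (Fin n → ℤ) :=
  fun u => f (u - v)

/-- The ideal generated in the Laurent polynomial semiring by an ideal of the
polynomial semiring: its elements are the Laurent-monomial multiples `x^v ⊙ f`, `f ∈ I`. -/
def Lext (I : Set (TPoly (Fin n → ℕ))) : Set (TPoly (Fin n → ℤ)) :=
  {g | ∃ f ∈ I, ∃ v : Fin n → ℤ, g = shiftZ v (embed f)}

/-- The intersection of a Laurent ideal with the polynomial subsemiring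
`ℝ̄[x₁,…,xₙ]`, viewed as a set of (ℕ-exponent) polynomials. -/
def restrictPoly (I : Set (TPoly (Fin n → ℤ))) : Set (TPoly (Fin n → ℕ)) :=
  {f | embed f ∈ I}

def dotZ (w : Fin n → ℝ) (u : Fin n → ℤ) : ℝ := ∑ i, w i * (u i : ℝ)

def dotN (w : Fin n → ℝ) (u : Fin n → ℕ) : ℝ := ∑ i, w i * (u i : ℝ)

/-- `attainsZ w f u`: the monomial `u` occurs in `f` and attains the minimum in the
tropical evaluation of `f` at `w`. -/
def attainsZ (w : Fin n → ℝ) (f : TPoly (Fin n → ℤ)) (u : Fin n → ℤ) : Prop :=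
  f u ≠ ⊤ ∧ ∀ v : Fin n → ℤ, f u + ((dotZ w u : ℝ) : TR) ≤ f v + ((dotZ w v : ℝ) : TR)

def attainsN (w : Fin n → ℝ) (f : TPoly (Fin n → ℕ)) (u : Fin n → ℕ) : Prop :=
  f u ≠ ⊤ ∧ ∀ v : Fin n → ℕ, f u + ((dotN w u : ℝ) : TR) ≤ f v + ((dotN w v : ℝ) : TR)

/-- The support of the initial form `in_w(f)` of a Laurent polynomial, a Boolean
polynomial represented by its set of monomials. -/
def inSuppZ (w : Fin n → ℝ) (f : TPoly (Fin n → ℤ)) : Set (Fin n → ℤ) := {u | attainsZ w f u}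

def inSuppN (w : Fin n → ℝ) (f : TPoly (Fin n → ℕ)) : Set (Fin n → ℕ) := {u | attainsN w f u}

/-- The initial ideal `in_w(I)` of a Laurent tropical ideal, represented as the set of
supports of the (Boolean) initial forms of elements of `I`. -/
def inIdealZ (I : Set (TPoly (Fin n → ℤ))) (w : Fin n → ℝ) : Set (Set (Fin n → ℤ)) :=
  {S | ∃ f ∈ I, S = inSuppZ w f}

def inIdealN (I : Set (TPoly (Fin n → ℕ))) (w : Fin n → ℝ) : Set (Set (Fin n → ℕ)) :=
  {S | ∃ f ∈ I, S = inSuppN w f}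

/-- The tropical variety of a Laurent tropical ideal: points where every nonzero
element attains its minimum at least twice. -/
def trvarietyZ (I : Set (TPoly (Fin n → ℤ))) : Set (Fin n → ℝ) :=
  {w | ∀ f ∈ I, (∀ u, f u = ⊤) ∨ ∃ u v, u ≠ v ∧ attainsZ w f u ∧ attainsZ w f v}

/-- `attainsB w S u`: in the Boolean polynomial with support `S`, the monomial `u`
attains the minimum at `w`. -/
def attainsB (w : Fin n → ℝ) (S : Set (Fin n → ℤ)) (u : Fin n → ℤ) : Prop :=
  u ∈ S ∧ ∀ v ∈ S, dotZ w u ≤ dotZ w v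

/-- Support of the initial form of a Boolean polynomial (given by its support `S`). -/
def inSuppB (w : Fin n → ℝ) (S : Set (Fin n → ℤ)) : Set (Fin n → ℤ) := {u | attainsB w S u}

/-- Variety of a Boolean (support-set) ideal. -/
def BvarietyZ (J : Set (Set (Fin n → ℤ))) : Set (Fin n → ℝ) :=
  {w | ∀ S ∈ J, S = ∅ ∨ ∃ u v, u ≠ v ∧ attainsB w S u ∧ attainsB w S v}

/-- A monomial term order on `ℝ̄[x₁,…,xₙ]` (as a strict order relation `r`, where
`r u v` means `x^u ≺ x^v`).  Note `x^0 = 1` is the largest monomial. -/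
structure IsTermOrder (n : ℕ) (r : (Fin n → ℕ) → (Fin n → ℕ) → Prop) : Prop where
  irrefl : ∀ u, ¬ r u u
  trans : ∀ u v w, r u v → r v w → r u w
  total : ∀ u v, u ≠ v → r u v ∨ r v u
  add_invariant : ∀ u v t, r u v → r (u + t) (v + t)
  lt_one : ∀ u, u ≠ 0 → r u 0

/-- `u` is the `r`-initial monomial of `f`: the `r`-smallest monomial in the support. -/
def isInitialMon (r : (Fin n → ℕ) → (Fin n → ℕ) → Prop) (f : TPoly (Fin n → ℕ))
    (u : Fin n → ℕ) : Prop :=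
  f u ≠ ⊤ ∧ ∀ v, f v ≠ ⊤ → v ≠ u → r u v

/-- The set of monomials of the monomial initial ideal `in_≺(I)`: all monomial
multiples of initial monomials of elements of `I`. -/
def monInitialSet (r : (Fin n → ℕ) → (Fin n → ℕ) → Prop) (I : Set (TPoly (Fin n → ℕ))) :
    Set (Fin n → ℕ) :=
  {u | ∃ g ∈ I, ∃ v, isInitialMon r g v ∧ ∃ t, u = v + t}

/-- Total degree of a monomial. -/
def totdeg (u : Fin m → ℕ) : ℕ := ∑ i, u i

/-- `E` is an independent set for (the matroids of) `I`: it does not contain the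
support of any nonzero polynomial of `I`. -/
def indepFinset (I : Set (TPoly (Fin m → ℕ))) (E : Finset (Fin m → ℕ)) : Prop :=
  ∀ f ∈ I, (∃ u, f u ≠ ⊤) → ¬ (psupp f ⊆ ↑E)

/-- `hilbAt I d N`: the Hilbert function of the homogeneous tropical ideal `I` takes
the value `N` at degree `d`, i.e. `N` is the maximum size of a set of degree-`d`
monomials not containing the support of any polynomial of `I`. -/
def hilbAt (I : Set (TPoly (Fin m → ℕ))) (d N : ℕ) : Prop :=
  (∃ E : Finset (Fin m → ℕ), (∀ u ∈ E, totdeg u = d) ∧ indepFinset I E ∧ E.card = N) ∧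
    ∀ E : Finset (Fin m → ℕ), (∀ u ∈ E, totdeg u = d) → indepFinset I E → E.card ≤ N

/-- The degree-`d` homogeneous part of a tropical polynomial. -/
def homPart (f : TPoly (Fin m → ℕ)) (d : ℕ) : TPoly (Fin m → ℕ) :=
  fun u => if totdeg u = d then f u else ⊤

/-- A homogeneous tropical ideal. -/
def IsHomogTropIdeal (I : Set (TPoly (Fin m → ℕ))) : Prop :=
  IsTropIdeal I ∧ ∀ f ∈ I, ∀ d : ℕ, homPart f d ∈ I

/-- The (total) degree of a tropical polynomial. -/
def polyDeg (f : TPoly (Fin m → ℕ)) : ℕ := sSup (totdeg '' psupp f)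

/-- The homogenization of a tropical polynomial, using a new variable `x₀`. -/
def homogenize (f : TPoly (Fin m → ℕ)) : TPoly (Fin (m + 1) → ℕ) :=
  fun v => if v 0 + totdeg (fun i : Fin m => v i.succ) = polyDeg f
    then f (fun i : Fin m => v i.succ) else ⊤

/-- The homogenization of a tropical ideal. -/
def homogIdeal (I : Set (TPoly (Fin m → ℕ))) : Set (TPoly (Fin (m + 1) → ℕ)) :=
  idealGen (homogenize '' I)

/-- `dimAgrees I p`: `p` is the Hilbert polynomial of the homogenization of `I`,
i.e. the Hilbert function of `I^h` eventually agrees with `p`.  The dimension of the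
tropical ideal `I` is the degree of such a `p`. -/
def dimAgrees (I : Set (TPoly (Fin m → ℕ))) (p : Polynomial ℝ) : Prop :=
  ∀ᶠ d in atTop, ∃ N : ℕ, hilbAt (homogIdeal I) d N ∧ (N : ℝ) = p.eval (d : ℝ)

/-- Specialization of the last variable `x_{n+1} = a` of a tropical polynomial. -/
def specLast (a : ℝ) (f : TPoly (Fin (n + 1) → ℕ)) : TPoly (Fin n → ℕ) :=
  fun u => sInf {t : TR | ∃ k : ℕ, t = f (Fin.snoc u k) + k • ((a : ℝ) : TR)}

/-- Specialization of the `y`-variables at a point `a ∈ ℝ̄^m`. -/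
def specializeY (a : Fin m → TR) (f : TPoly ((Fin n → ℕ) × (Fin m → ℕ))) :
    TPoly (Fin n → ℕ) :=
  fun u => sInf {t : TR | ∃ v : Fin m → ℕ, t = f (u, v) + ∑ i, v i • a i}

/-- Dehomogenization: substitute `x₀ = 0` (the tropical multiplicative unit). -/
def dehom (f : TPoly (Fin (n + 1) → ℕ)) : TPoly (Fin n → ℕ) :=
  fun u => sInf {t : TR | ∃ k : ℕ, t = f (Fin.cons k u)}

/-- The trivialization of a tropical polynomial: all finite coefficients become `0`. -/
def phiBool (f : TPoly (Fin (n + 1) → ℕ)) : TPoly (Fin (n + 1) → ℕ) :=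
  fun u => if f u = ⊤ then (⊤ : TR) else 0

/-- Independence of a finite set of Laurent monomials relative to a Laurent ideal. -/
def LindepFinset (I : Set (TPoly (Fin n → ℤ))) (E : Finset (Fin n → ℤ)) : Prop :=
  ∀ f ∈ I, (∃ u, f u ≠ ⊤) → ¬ (psupp f ⊆ ↑E)

/-- `LdegIs I d`: the zero-dimensional Laurent tropical ideal `I` has degree `d`:
`d` is the maximal size of a finite set of monomials not containing the support
of any nonzero element of `I`. -/
def LdegIs (I : Set (TPoly (Fin n → ℤ))) (d : ℕ) : Prop :=
  (∃ E : Finset (Fin n → ℤ), LindepFinset I E ∧ E.card = d) ∧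
    ∀ E : Finset (Fin n → ℤ), LindepFinset I E → E.card ≤ d

/-- A Laurent tropical ideal is zero-dimensional if the sizes of independent sets of
monomials are bounded. -/
def IsZeroDimL (I : Set (TPoly (Fin n → ℤ))) : Prop :=
  ∃ N : ℕ, ∀ E : Finset (Fin n → ℤ), LindepFinset I E → E.card ≤ N

def BindepFinset (J : Set (Set (Fin n → ℤ))) (E : Finset (Fin n → ℤ)) : Prop :=
  ∀ S ∈ J, S.Nonempty → ¬ (S ⊆ ↑E)

/-- Degree of a zero-dimensional Boolean (support-set) ideal. -/
def BdegIs (J : Set (Set (Fin n → ℤ))) (d : ℕ) : Prop :=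
  (∃ E : Finset (Fin n → ℤ), BindepFinset J E ∧ E.card = d) ∧
    ∀ E : Finset (Fin n → ℤ), BindepFinset J E → E.card ≤ d

/-- A Laurent monomial `u` has degree zero for the grading induced by the subspace `L`. -/
def degZero (L : Submodule ℝ (Fin n → ℝ)) (u : Fin n → ℤ) : Prop :=
  ∀ v ∈ L, (∑ i, v i * (u i : ℝ)) = 0

/-- Degree of the degree-zero part (for the grading induced by `L`) of a Boolean
support-set ideal `J`: the maximal size of a finite set of degree-zero monomials not
containing the support of any nonempty element of the degree-zero part of `J`. -/
def Bdeg0Is (J : Set (Set (Fin n → ℤ))) (L : Submodule ℝ (Fin n → ℝ)) (d : ℕ) : Prop :=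
  (∃ E : Finset (Fin n → ℤ), (∀ u ∈ E, degZero L u) ∧
      (∀ S ∈ J, (∀ u ∈ S, degZero L u) → S.Nonempty → ¬ (S ⊆ ↑E)) ∧ E.card = d) ∧
    ∀ E : Finset (Fin n → ℤ), (∀ u ∈ E, degZero L u) →
      (∀ S ∈ J, (∀ u ∈ S, degZero L u) → S.Nonempty → ¬ (S ⊆ ↑E)) → E.card ≤ d

/-- An `ℝ`-rational polyhedron: defined by finitely many inequalities with integral
normal vectors and real constants. -/
def IsRatPolyhedron (P : Set (Fin n → ℝ)) : Prop :=
  ∃ (k : ℕ) (a : Fin k → Fin n → ℤ) (b : Fin k → ℝ),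
    P = {x | ∀ i, (∑ j, (a i j : ℝ) * x j) ≤ b i}

/-- `F` is a face of the polyhedron `P`. -/
def IsFaceOf (F P : Set (Fin n → ℝ)) : Prop :=
  F = P ∨ ∃ (a : Fin n → ℝ) (b : ℝ), (∀ x ∈ P, (∑ i, a i * x i) ≤ b) ∧
    F = {x | x ∈ P ∧ (∑ i, a i * x i) = b}

/-- The linear span of the directions of a subset of `ℝⁿ`. -/
def spanDirs (σ : Set (Fin n → ℝ)) : Submodule ℝ (Fin n → ℝ) :=
  Submodule.span ℝ {y | ∃ p ∈ σ, ∃ q ∈ σ, y = p - q}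

/-- The dimension of a polyhedron. -/
def pdim (σ : Set (Fin n → ℝ)) : ℕ := Module.finrank ℝ (spanDirs σ)

/-- `u ∈ ℤⁿ` is primitive modulo the subspace `L`: it is a first lattice point, i.e.
nonzero and not a `k`-th multiple (`k ≥ 2`) of a lattice vector modulo `L`. -/
def PrimitiveMod (L : Submodule ℝ (Fin n → ℝ)) (u : Fin n → ℤ) : Prop :=
  (fun i => (u i : ℝ)) ∉ L ∧
    ∀ k : ℕ, 2 ≤ k → ∀ v : Fin n → ℤ, (fun i => (u i : ℝ) - (k : ℝ) * (v i : ℝ)) ∉ L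

/-- `hasDisk S d`: `S` contains a `d`-dimensional disk around some point. -/
def hasDisk (S : Set (Fin n → ℝ)) (d : ℕ) : Prop :=
  ∃ (x : Fin n → ℝ) (W : Submodule ℝ (Fin n → ℝ)), Module.finrank ℝ W = d ∧
    ∃ ε > (0 : ℝ), ∀ y ∈ W, ‖y‖ < ε → x + y ∈ S

/-- The monomial map `φ* : x^u ↦ y^{Au}` on Laurent tropical polynomials. -/
def phiMap (A : Matrix (Fin n) (Fin n) ℤ) (f : TPoly (Fin n → ℤ)) : TPoly (Fin n → ℤ) :=
  fun v => if h : ∃ u : Fin n → ℤ, A.mulVec u = v then f h.choose else ⊤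

end Vars

section Product

variable {n m : ℕ}

def attainsP (x : (Fin n → ℝ) × (Fin m → ℝ)) (f : TPoly ((Fin n → ℤ) × (Fin m → ℤ)))
    (p : (Fin n → ℤ) × (Fin m → ℤ)) : Prop :=
  f p ≠ ⊤ ∧ ∀ q : (Fin n → ℤ) × (Fin m → ℤ),
    f p + ((dotZ x.1 p.1 + dotZ x.2 p.2 : ℝ) : TR) ≤ f q + ((dotZ x.1 q.1 + dotZ x.2 q.2 : ℝ) : TR)

def trvarietyP (I : Set (TPoly ((Fin n → ℤ) × (Fin m → ℤ)))) :
    Set ((Fin n → ℝ) × (Fin m → ℝ)) :=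
  {x | ∀ f ∈ I, (∀ p, f p = ⊤) ∨ ∃ p q, p ≠ q ∧ attainsP x f p ∧ attainsP x f q}

end Product

section Univariate

def attains1 (x : ℝ) (f : TPoly ℤ) (u : ℤ) : Prop :=
  f u ≠ ⊤ ∧ ∀ v : ℤ, f u + (((u : ℝ) * x : ℝ) : TR) ≤ f v + (((v : ℝ) * x : ℝ) : TR)

def inSupp1 (x : ℝ) (f : TPoly ℤ) : Set ℤ := {u | attains1 x f u}

def trvariety1 (I : Set (TPoly ℤ)) : Set ℝ :=
  {x | ∀ f ∈ I, (∀ u, f u = ⊤) ∨ ∃ u v, u ≠ v ∧ attains1 x f u ∧ attains1 x f v}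

/-- The variety of a single univariate Laurent tropical polynomial. -/
def Vf (h : TPoly ℤ) : Set ℝ :=
  {x | (∀ u, h u = ⊤) ∨ ∃ u v, u ≠ v ∧ attains1 x h u ∧ attains1 x h v}

/-- Evaluation of a univariate Laurent tropical polynomial at `x ∈ ℝ`. -/
def eval1 (f : TPoly ℤ) (x : ℝ) : TR := sInf {t : TR | ∃ u : ℤ, t = f u + (((u : ℝ) * x : ℝ) : TR)}

/-- `g` is the convexification of `f`: it defines the same function and has the
(pointwise) minimal coefficients among all such polynomials. -/
def IsLConv (f g : TPoly ℤ) : Prop :=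
  (∀ x : ℝ, eval1 g x = eval1 f x) ∧
    ∀ h : TPoly ℤ, (∀ x : ℝ, eval1 h x = eval1 f x) → ∀ u, g u ≤ h u

/-- Tropical multiplication of univariate Laurent polynomials. -/
def pmulZ (f g : TPoly ℤ) : TPoly ℤ :=
  fun u => sInf {t : TR | ∃ i j : ℤ, i + j = u ∧ t = f i + g j}

def unit1 : TPoly ℤ := monPoly (0 : ℤ)

def powZ (f : TPoly ℤ) : ℕ → TPoly ℤ
  | 0 => unit1
  | (k + 1) => pmulZ f (powZ f k)

/-- The linear tropical polynomial `x ⊕ w`. -/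
def lin1 (w : ℝ) : TPoly ℤ :=
  fun u => if u = 0 then ((w : ℝ) : TR) else if u = 1 then (0 : TR) else ⊤

/-- Tropical divisibility of univariate Laurent polynomials. -/
def LDvd (f g : TPoly ℤ) : Prop := ∃ q : TPoly ℤ, (psupp q).Finite ∧ g = pmulZ f q

/-- `in_w(f)` is a Boolean polynomial lying in `𝔹[x]` of degree `m`. -/
def goodAt (x : ℝ) (f : TPoly ℤ) (m : ℕ) : Prop :=
  (m : ℤ) ∈ inSupp1 x f ∧ ∀ u ∈ inSupp1 x f, 0 ≤ u ∧ u ≤ (m : ℤ)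

/-- The multiplicity of `V(I)` at `x`: the smallest degree of a Boolean polynomial in
`in_x(I) ∩ 𝔹[x]`. -/
def idealMult1 (I : Set (TPoly ℤ)) (x : ℝ) (m : ℕ) : Prop :=
  (∃ f ∈ I, goodAt x f m) ∧ ∀ f ∈ I, ∀ m' : ℕ, goodAt x f m' → m ≤ m'

/-- The multiplicity of a univariate tropical polynomial `h` at `w`: the exponent of
the factor `(x ⊕ w)` in the factorization of the convexification of `h`. -/
def polyMult1 (h : TPoly ℤ) (w : ℝ) (m : ℕ) : Prop :=
  ∃ ch : TPoly ℤ, IsLConv h ch ∧ LDvd (powZ (lin1 w) m) ch ∧ ¬ LDvd (powZ (lin1 w) (m + 1)) ch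

end Univariate

end TropStmt

/-! Both Hilbert functions count the standard monomials of degree `d`, those outside
`in_≺(I)`. For the monomial ideal this is immediate. For `I`, the standard monomials are
independent because every nonzero polynomial contains its initial monomial. Conversely, an
independent set `E` containing some `u ∈ in_≺(I)` can trade `u` for a monomial `w ≻ u` outside
`E` and stay independent: otherwise the circuits inside the sets `E - u + w` would eliminate,
one after another, all monomials outside `E` from a homogeneous polynomial with initial
monomial `u`, never touching `u`, and leave a nonzero polynomial supported on `E`. Each trade
moves up in the term order among the finitely many monomials of degree `d`, so trading ends
with a set of standard monomials of the same size as `E`. -/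

namespace TropStmt

section Support

variable {M : Type}

lemma psupp_monPoly [AddCommMonoid M] (u : M) : psupp (monPoly u) = {u} := by
  ext v
  by_cases h : v = u <;> simp [psupp, monPoly, h]

lemma psupp_tadd [AddCommMonoid M] (f g : TPoly M) : psupp (tadd f g) = psupp f ∪ psupp g := by
  ext u
  simp only [psupp, tadd, Set.mem_ofPred_eq, Set.mem_union, ne_eq, min_eq_top, not_and_or]

lemma psupp_tmulTerm_subset [AddCommMonoid M] (c : TR) (v : M) (f : TPoly M) :
    psupp (tmulTerm c v f) ⊆ (· + v) '' psupp f := by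
  intro s hs
  by_cases h : ∃ t : M, t + v = s
  · refine ⟨h.choose, fun ht => hs ?_, h.choose_spec⟩
    simp only [tmulTerm, dif_pos h, ht, add_top]
  · exact absurd (dif_neg h) hs

lemma tmulTerm_zero_apply [AddCommMonoid M] (c : TR) (f : TPoly M) (u : M) :
    tmulTerm c 0 f u = c + f u := by
  have h : ∃ t : M, t + 0 = u := ⟨u, add_zero u⟩
  rw [tmulTerm, dif_pos h, ← add_zero h.choose, h.choose_spec]

lemma tmulTerm_apply_add [AddCancelCommMonoid M] (c : TR) (v t : M) (f : TPoly M) :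
    tmulTerm c v f (t + v) = c + f t := by
  have h : ∃ s : M, s + v = t + v := ⟨t, rfl⟩
  rw [tmulTerm, dif_pos h, add_right_cancel h.choose_spec]

lemma psupp_tmulTerm [AddCancelCommMonoid M] {c : TR} (hc : c ≠ ⊤) (v : M) (f : TPoly M) :
    psupp (tmulTerm c v f) = (· + v) '' psupp f := by
  refine (psupp_tmulTerm_subset c v f).antisymm ?_
  rintro _ ⟨t, ht, rfl⟩
  simpa only [psupp, Set.mem_ofPred_eq, tmulTerm_apply_add] using WithTop.add_ne_top.2 ⟨hc, ht⟩

lemma isTIdeal_setOf_psupp_subset [AddCommMonoid M] {S : Set M}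
    (hS : ∀ u ∈ S, ∀ t, u + t ∈ S) :
    IsTIdeal {f : TPoly M | (psupp f).Finite ∧ psupp f ⊆ S} := by
  have hzero : psupp (zeroPoly M) = ∅ := Set.eq_empty_of_forall_notMem fun _ h => h rfl
  refine ⟨fun f hf => hf.1, ?_, ?_, ?_⟩
  · simp only [Set.mem_ofPred_eq, hzero, Set.finite_empty, Set.empty_subset, and_self]
  · rintro f ⟨hf, hfS⟩ g ⟨hg, hgS⟩
    rw [Set.mem_ofPred_eq, psupp_tadd]
    exact ⟨hf.union hg, Set.union_subset hfS hgS⟩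
  · rintro f ⟨hf, hfS⟩ c v
    refine ⟨(hf.image _).subset (psupp_tmulTerm_subset c v f), ?_⟩
    rintro _ hs
    obtain ⟨t, ht, rfl⟩ := psupp_tmulTerm_subset c v f hs
    exact hS t (hfS ht) v

lemma idealGen_subset [AddCommMonoid M] {S K : Set (TPoly M)} (hK : IsTIdeal K) (hSK : S ⊆ K) :
    idealGen S ⊆ K :=
  Set.sInter_subset_of_mem ⟨hK, hSK⟩

lemma tmulTerm_mem_idealGen [AddCommMonoid M] {S : Set (TPoly M)} {f : TPoly M} (hf : f ∈ S)
    (c : TR) (v : M) : tmulTerm c v f ∈ idealGen S :=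
  fun _ ⟨hK, hSK⟩ => hK.2.2.2 f (hSK hf) c v

/-- Elimination after rescaling `g` so that its coefficient at `w` matches that of `f`. -/
lemma IsTropIdeal.exists_eliminate [AddCommMonoid M] {I : Set (TPoly M)} (hI : IsTropIdeal I)
    {f g : TPoly M} (hf : f ∈ I) (hg : g ∈ I) {w : M} (hfw : f w ≠ ⊤) (hgw : g w ≠ ⊤) :
    ∃ h ∈ I, h w = ⊤ ∧ psupp h ⊆ psupp f ∪ psupp g ∧ ∀ v, g v = ⊤ → h v = f v := by
  obtain ⟨a, ha⟩ := WithTop.ne_top_iff_exists.1 hfw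
  obtain ⟨b, hb⟩ := WithTop.ne_top_iff_exists.1 hgw
  set g' := tmulTerm ((a - b : ℝ) : TR) 0 g
  have hg' : ∀ v, g' v = ((a - b : ℝ) : TR) + g v := tmulTerm_zero_apply _ g
  have hg'w : f w = g' w := by rw [hg', ← ha, ← hb, ← WithTop.coe_add, sub_add_cancel]
  obtain ⟨h, hh, hhw, hmin⟩ := hI.2 f hf g' (hI.1.2.2.2 g hg _ 0) w hg'w hfw
  refine ⟨h, hh, hhw, fun v hv => ?_, fun v hgv => ?_⟩
  · have hle := (hmin v).1
    by_contra hfg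
    simp only [Set.mem_union, psupp, Set.mem_ofPred_eq, not_or, not_not] at hfg
    rw [hg', hfg.1, hfg.2, add_top, min_self, top_le_iff] at hle
    exact hv hle
  · have hg'v : g' v = ⊤ := by rw [hg', hgv, add_top]
    by_cases hfv : f v = ⊤
    · rw [hfv]
      simpa [hfv, hg'v] using (hmin v).1
    · rw [(hmin v).2 (by rwa [hg'v]), hg'v, min_top_right]

end Support

section Independence

variable {m : ℕ} {I : Set (TPoly (Fin m → ℕ))} {E : Finset (Fin m → ℕ)}

lemma IsTropIdeal.exists_reduce_outside (hI : IsTropIdeal I) (hE : indepFinset I E)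
    {f g : TPoly (Fin m → ℕ)} (hf : f ∈ I) (hg : g ∈ I) (hg0 : ∃ u, g u ≠ ⊤) {w : Fin m → ℕ}
    (hfw : f w ≠ ⊤) (hgE : psupp g ⊆ insert w (E : Set (Fin m → ℕ))) :
    ∃ h ∈ I, psupp h \ (E : Set (Fin m → ℕ)) ⊆ (psupp f \ E) \ {w} ∧
      ∀ v, g v = ⊤ → h v = f v := by
  have hgw : g w ≠ ⊤ := fun hgw =>
    hE g hg hg0 fun s hs => (hgE hs).resolve_left fun hsw => hs (hsw ▸ hgw)
  obtain ⟨h, hh, hhw, hsupp, hagree⟩ := hI.exists_eliminate hf hg hfw hgw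
  refine ⟨h, hh, fun s ⟨hs, hsE⟩ => ⟨⟨?_, hsE⟩, fun hsw => hs (hsw ▸ hhw)⟩, hagree⟩
  rcases hsupp hs with hsf | hsg
  · exact hsf
  · rcases hgE hsg with rfl | hsE'
    · exact absurd hhw hs
    · exact absurd hsE' hsE

lemma IsTropIdeal.exists_indepFinset_exchange (hI : IsTropIdeal I) (hE : indepFinset I E)
    {u₀ : Fin m → ℕ} (hu₀ : u₀ ∈ E) {f : TPoly (Fin m → ℕ)} (hf : f ∈ I) (hfu₀ : f u₀ ≠ ⊤) :
    ∃ w ∈ psupp f, w ∉ E ∧ indepFinset I (insert w (E.erase u₀)) := by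
  by_contra! hdep
  suffices ∀ k, ∀ f' ∈ I, (psupp f' \ ↑E).ncard = k → f' u₀ ≠ ⊤ →
      psupp f' \ ↑E ⊆ psupp f \ ↑E → False from this _ f hf rfl hfu₀ subset_rfl
  intro k
  induction k using Nat.strong_induction_on with
  | _ k ih =>
  rintro f' hf' rfl hf'u₀ hf'f
  obtain ⟨w, hw, hwE⟩ : (psupp f' \ ↑E).Nonempty := by
    rw [Set.nonempty_iff_ne_empty, Ne, Set.sdiff_eq_empty]
    exact hE f' hf' ⟨u₀, hf'u₀⟩
  have hwdep := hdep w (hf'f ⟨hw, hwE⟩).1 hwE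
  simp only [indepFinset, not_forall, not_not] at hwdep
  obtain ⟨g, hg, hg0, hgE⟩ := hwdep
  have hgE' : psupp g ⊆ insert w (E : Set (Fin m → ℕ)) :=
    hgE.trans (by simpa using Set.insert_subset_insert (Finset.coe_subset.2 (E.erase_subset u₀)))
  obtain ⟨h, hh, hhsub, hagree⟩ := hI.exists_reduce_outside hE hf' hg hg0 hw hgE'
  have hgu₀ : g u₀ = ⊤ := by
    by_contra hgu₀
    rcases Finset.mem_insert.1 (hgE hgu₀) with rfl | hu₀'
    · exact hwE hu₀
    · exact Finset.notMem_erase u₀ E hu₀'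
  refine ih _ ?_ h hh rfl (by rwa [hagree u₀ hgu₀]) (hhsub.trans (Set.sdiff_subset.trans hf'f))
  exact Set.ncard_lt_ncard (hhsub.trans_ssubset (Set.sdiff_singleton_ssubset.2 ⟨hw, hwE⟩))
    ((hI.1.1 f' hf').sdiff)

lemma hilbAt_iff_eq_card {K : Set (TPoly (Fin m → ℕ))} {d N : ℕ} {B : Finset (Fin m → ℕ)}
    (hBdeg : ∀ u ∈ B, totdeg u = d) (hB : indepFinset K B)
    (hmax : ∀ E : Finset (Fin m → ℕ), (∀ u ∈ E, totdeg u = d) → indepFinset K E →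
      E.card ≤ B.card) :
    hilbAt K d N ↔ N = B.card :=
  ⟨fun ⟨⟨E, hEdeg, hE, hEN⟩, hle⟩ => le_antisymm (hEN ▸ hmax E hEdeg hE) (hle B hBdeg hB),
    fun hN => hN ▸ ⟨⟨B, hBdeg, hB, rfl⟩, hmax⟩⟩

end Independence

section TermOrder

variable {m : ℕ} {r : (Fin m → ℕ) → (Fin m → ℕ) → Prop} {I : Set (TPoly (Fin m → ℕ))}

lemma totdeg_add (u v : Fin m → ℕ) : totdeg (u + v) = totdeg u + totdeg v :=
  Finset.sum_add_distrib

lemma homPart_ne_top {f : TPoly (Fin m → ℕ)} {d : ℕ} {u : Fin m → ℕ} :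
    homPart f d u ≠ ⊤ ↔ totdeg u = d ∧ f u ≠ ⊤ := by
  unfold homPart
  split_ifs with h <;> simp [h]

lemma IsTermOrder.exists_isInitialMon (hr : IsTermOrder m r) {f : TPoly (Fin m → ℕ)}
    (hfin : (psupp f).Finite) (hne : (psupp f).Nonempty) : ∃ u, isInitialMon r f u := by
  have : IsStrictOrder _ r := { irrefl := hr.irrefl, trans := hr.trans }
  obtain ⟨⟨u, hu⟩, -, hmin⟩ :=
    (hfin.wellFoundedOn (r := r)).has_min Set.univ ⟨⟨_, hne.some_mem⟩, trivial⟩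
  exact ⟨u, hu, fun v hv hvu =>
    (hr.total u v (Ne.symm hvu)).resolve_right (hmin ⟨v, hv⟩ trivial)⟩

lemma isInitialMon.mem_monInitialSet {f : TPoly (Fin m → ℕ)} {u : Fin m → ℕ}
    (hu : isInitialMon r f u) (hf : f ∈ I) : u ∈ monInitialSet r I :=
  ⟨f, hf, u, hu, 0, (add_zero u).symm⟩

lemma monInitialSet_add {u : Fin m → ℕ} (hu : u ∈ monInitialSet r I) (t : Fin m → ℕ) :
    u + t ∈ monInitialSet r I := by
  obtain ⟨g, hg, v, hv, s, rfl⟩ := hu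
  exact ⟨g, hg, v, hv, s + t, add_assoc v s t⟩

lemma isInitialMon_homPart {f : TPoly (Fin m → ℕ)} {u : Fin m → ℕ} (hu : isInitialMon r f u) :
    isInitialMon r (homPart f (totdeg u)) u :=
  ⟨homPart_ne_top.2 ⟨rfl, hu.1⟩, fun v hv hvu => hu.2 v (homPart_ne_top.1 hv).2 hvu⟩

lemma IsTermOrder.isInitialMon_tmulTerm (hr : IsTermOrder m r) {f : TPoly (Fin m → ℕ)}
    {u : Fin m → ℕ} (hu : isInitialMon r f u) (t : Fin m → ℕ) :
    isInitialMon r (tmulTerm 0 t f) (u + t) := by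
  refine ⟨by rw [tmulTerm_apply_add, zero_add]; exact hu.1, fun s hs hsu => ?_⟩
  obtain ⟨v, hv, rfl⟩ := psupp_tmulTerm_subset 0 t f hs
  exact hr.add_invariant u v t (hu.2 v hv fun hvu => hsu (hvu ▸ rfl))

lemma IsTermOrder.exists_homogeneous_isInitialMon (hr : IsTermOrder m r)
    (hI : IsHomogTropIdeal I) {u : Fin m → ℕ} (hu : u ∈ monInitialSet r I) :
    ∃ f ∈ I, isInitialMon r f u ∧ ∀ s ∈ psupp f, totdeg s = totdeg u := by
  obtain ⟨g, hg, v, hv, t, rfl⟩ := hu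
  refine ⟨_, hI.1.1.2.2.2 _ (hI.2 g hg (totdeg v)) 0 t,
    hr.isInitialMon_tmulTerm (isInitialMon_homPart hv) t, fun s hs => ?_⟩
  obtain ⟨s', hs', rfl⟩ := psupp_tmulTerm_subset _ _ _ hs
  rw [totdeg_add, totdeg_add, (homPart_ne_top.1 hs').1]

lemma IsTermOrder.indepFinset_of_forall_notMem (hr : IsTermOrder m r)
    (hI : ∀ f ∈ I, (psupp f).Finite) {E : Finset (Fin m → ℕ)}
    (hE : ∀ u ∈ E, u ∉ monInitialSet r I) : indepFinset I E := by
  rintro f hf ⟨u, hu⟩ hsub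
  obtain ⟨v, hv⟩ := hr.exists_isInitialMon (hI f hf) ⟨u, hu⟩
  exact hE v (hsub hv.1) (hv.mem_monInitialSet hf)

lemma IsTermOrder.exists_exchange_of_mem_monInitialSet (hr : IsTermOrder m r)
    (hI : IsHomogTropIdeal I) {d : ℕ} {E : Finset (Fin m → ℕ)} (hEdeg : ∀ u ∈ E, totdeg u = d)
    (hE : indepFinset I E) {u₀ : Fin m → ℕ} (hu₀E : u₀ ∈ E) (hu₀ : u₀ ∈ monInitialSet r I) :
    ∃ w, totdeg w = d ∧ r u₀ w ∧ w ∉ E ∧ indepFinset I (insert w (E.erase u₀)) := by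
  obtain ⟨f, hf, hinit, hdeg⟩ := hr.exists_homogeneous_isInitialMon hI hu₀
  obtain ⟨w, hw, hwE, hind⟩ := hI.1.exists_indepFinset_exchange hE hu₀E hf hinit.1
  exact ⟨w, (hdeg w hw).trans (hEdeg u₀ hu₀E), hinit.2 w hw fun h => hwE (h ▸ hu₀E), hwE,
    hind⟩

end TermOrder

section StandardMonomials

open Finset

variable {m : ℕ} {r : (Fin m → ℕ) → (Fin m → ℕ) → Prop} {I : Set (TPoly (Fin m → ℕ))}

def stdMonomials (r : (Fin m → ℕ) → (Fin m → ℕ) → Prop) (I : Set (TPoly (Fin m → ℕ)))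
    (d : ℕ) : Finset (Fin m → ℕ) :=
  {u ∈ Nat.antidiagonalTuple m d | u ∉ monInitialSet r I}

lemma mem_stdMonomials {d : ℕ} {u : Fin m → ℕ} :
    u ∈ stdMonomials r I d ↔ totdeg u = d ∧ u ∉ monInitialSet r I := by
  rw [stdMonomials, mem_filter, Nat.mem_antidiagonalTuple, totdeg]

def numAbove (r : (Fin m → ℕ) → (Fin m → ℕ) → Prop) (d : ℕ) (u : Fin m → ℕ) : ℕ :=
  #{v ∈ Nat.antidiagonalTuple m d | r u v}

lemma IsTermOrder.numAbove_lt (hr : IsTermOrder m r) {d : ℕ} {u w : Fin m → ℕ}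
    (hw : totdeg w = d) (huw : r u w) : numAbove r d w < numAbove r d u := by
  unfold numAbove
  refine card_lt_card ((ssubset_iff_of_subset ?_).2 ⟨w, ?_, ?_⟩)
  · exact monotone_filter_right _ fun v _ hwv => hr.trans u w v huw hwv
  · exact mem_filter.2 ⟨Nat.mem_antidiagonalTuple.2 hw, huw⟩
  · exact fun h => hr.irrefl w (mem_filter.1 h).2

lemma IsTermOrder.card_le_card_stdMonomials (hr : IsTermOrder m r) (hI : IsHomogTropIdeal I)
    {d : ℕ} {E : Finset (Fin m → ℕ)} (hEdeg : ∀ u ∈ E, totdeg u = d) (hE : indepFinset I E) :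
    #E ≤ #(stdMonomials r I d) := by
  obtain ⟨k, hk⟩ : ∃ k, ∑ u ∈ E, numAbove r d u = k := ⟨_, rfl⟩
  induction k using Nat.strong_induction_on generalizing E with
  | _ k ih =>
  by_cases hstd : ∀ u ∈ E, u ∉ monInitialSet r I
  · exact card_le_card fun u hu => mem_stdMonomials.2 ⟨hEdeg u hu, hstd u hu⟩
  push Not at hstd
  obtain ⟨u₀, hu₀E, hu₀⟩ := hstd
  obtain ⟨w, hwd, hu₀w, hwE, hind⟩ :=
    hr.exists_exchange_of_mem_monInitialSet hI hEdeg hE hu₀E hu₀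
  have hw : w ∉ E.erase u₀ := fun h => hwE (mem_of_mem_erase h)
  have hdeg' : ∀ v ∈ insert w (E.erase u₀), totdeg v = d := by
    intro v hv
    rcases mem_insert.1 hv with rfl | hv
    exacts [hwd, hEdeg v (mem_of_mem_erase hv)]
  have hlt : ∑ u ∈ insert w (E.erase u₀), numAbove r d u < k := by
    rw [sum_insert hw, ← hk, ← add_sum_erase E _ hu₀E]
    exact Nat.add_lt_add_right (hr.numAbove_lt hwd hu₀w) _
  calc #E = #(insert w (E.erase u₀)) := by
        rw [card_insert_of_notMem hw, card_erase_add_one hu₀E]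
    _ ≤ #(stdMonomials r I d) := ih _ hlt hdeg' hind rfl

lemma IsTermOrder.hilbAt_iff_eq_card_stdMonomials (hr : IsTermOrder m r)
    (hI : IsHomogTropIdeal I) {d N : ℕ} : hilbAt I d N ↔ N = #(stdMonomials r I d) :=
  hilbAt_iff_eq_card (fun _ hu => (mem_stdMonomials.1 hu).1)
    (hr.indepFinset_of_forall_notMem hI.1.1.1 fun _ hu => (mem_stdMonomials.1 hu).2)
    fun _ hEdeg hE => hr.card_le_card_stdMonomials hI hEdeg hE

end StandardMonomials

section MonomialInitialIdeal

variable {m : ℕ} {r : (Fin m → ℕ) → (Fin m → ℕ) → Prop} {I : Set (TPoly (Fin m → ℕ))}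

def initialMonomialIdeal (r : (Fin m → ℕ) → (Fin m → ℕ) → Prop)
    (I : Set (TPoly (Fin m → ℕ))) : Set (TPoly (Fin m → ℕ)) :=
  idealGen {g | ∃ u, (∃ f ∈ I, isInitialMon r f u) ∧ g = monPoly u}

lemma psupp_subset_monInitialSet {f : TPoly (Fin m → ℕ)} (hf : f ∈ initialMonomialIdeal r I) :
    psupp f ⊆ monInitialSet r I := by
  refine (idealGen_subset (isTIdeal_setOf_psupp_subset fun _ hu t => monInitialSet_add hu t)
    ?_ hf).2
  rintro _ ⟨u, ⟨g, hg, hu⟩, rfl⟩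
  rw [Set.mem_ofPred_eq, psupp_monPoly]
  exact ⟨Set.finite_singleton u, Set.singleton_subset_iff.2 (hu.mem_monInitialSet hg)⟩

lemma exists_psupp_eq_singleton_of_mem_monInitialSet {u : Fin m → ℕ}
    (hu : u ∈ monInitialSet r I) : ∃ p ∈ initialMonomialIdeal r I, psupp p = {u} := by
  obtain ⟨g, hg, v, hv, t, rfl⟩ := hu
  refine ⟨tmulTerm 0 t (monPoly v), ?_, ?_⟩
  · refine tmulTerm_mem_idealGen ?_ 0 t
    exact ⟨v, ⟨g, hg, hv⟩, rfl⟩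
  · rw [psupp_tmulTerm WithTop.zero_ne_top, psupp_monPoly, Set.image_singleton]

lemma indepFinset_initialMonomialIdeal_iff {E : Finset (Fin m → ℕ)} :
    indepFinset (initialMonomialIdeal r I) E ↔ ∀ u ∈ E, u ∉ monInitialSet r I := by
  refine ⟨fun hE u huE hu => ?_, fun hE f hf ⟨u, hu⟩ hsub => ?_⟩
  · obtain ⟨p, hp, hpu⟩ := exists_psupp_eq_singleton_of_mem_monInitialSet hu
    have hup : u ∈ psupp p := hpu ▸ rfl
    exact hE p hp ⟨u, hup⟩ (hpu ▸ Set.singleton_subset_iff.2 huE)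
  · exact hE u (hsub hu) (psupp_subset_monInitialSet hf hu)

lemma hilbAt_initialMonomialIdeal_iff {d N : ℕ} :
    hilbAt (initialMonomialIdeal r I) d N ↔ N = (stdMonomials r I d).card :=
  hilbAt_iff_eq_card (fun _ hu => (mem_stdMonomials.1 hu).1)
    (indepFinset_initialMonomialIdeal_iff.2 fun _ hu => (mem_stdMonomials.1 hu).2)
    fun _ hEdeg hE => Finset.card_le_card fun u hu =>
      mem_stdMonomials.2 ⟨hEdeg u hu, indepFinset_initialMonomialIdeal_iff.1 hE u hu⟩

end MonomialInitialIdeal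

end TropStmt

theorem hilbert_function_of_monomial_initial_ideal
    (n : ℕ) (I : Set (TropStmt.TPoly (Fin (n + 1) → ℕ)))
    (hI : TropStmt.IsHomogTropIdeal I)
    (r : (Fin (n + 1) → ℕ) → (Fin (n + 1) → ℕ) → Prop)
    (hr : TropStmt.IsTermOrder (n + 1) r) :
    ∀ d N : ℕ,
      TropStmt.hilbAt
        (TropStmt.idealGen {g | ∃ u, (∃ f ∈ I, TropStmt.isInitialMon r f u) ∧ g = TropStmt.monPoly u})
        d N
      ↔ TropStmt.hilbAt I d N :=
  fun _ _ => TropStmt.hilbAt_initialMonomialIdeal_iff.trans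
    (hr.hilbAt_iff_eq_card_stdMonomials hI).symm
end
end

section
/- Let φ* : ℝ̄[x₁^{±1},…,xₙ^{±1}] → ℝ̄[y₁^{±1},…,yₙ^{±1}] be the semiring homomorphism sending x_i ↦ y^{a_i}, where the n×n integer matrix A with columns a_i has rank n. If J is a zero-dimensional tropical ideal, then the ideal J_φ generated by φ*(J) is a zero-dimensional tropical ideal with deg(J_φ) = |det(A)| · deg(J). -/
open scoped Classical
open Filter

noncomputable section

/-! The grading by `G = ℤⁿ ⧸ Aℤⁿ` splits a Laurent polynomial `g` into its parts on the cosets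
`w + Aℤⁿ`; read through `u ↦ Au + w`, the part on `w + Aℤⁿ` becomes a polynomial in `x`. The ideal
generated by `φ*(J)` is the set of all `g` whose coset parts all lie in `J`: this set is an ideal
(with finite supports because `G` is finite) containing `φ*(J)`, and each of its elements is the
tropical sum of the translates `y^w ⊙ φ*(g_w)` of its parts. Monomial elimination is done coset by
coset inside `J`. A finite set of monomials is independent for `J_φ` iff each of its `|G| = |det A|`
slices along the cosets is independent for `J`, which gives `deg J_φ = |det A| · deg J`. -/

theorem Matrix.index_range_mulVecLin {ι : Type*} [Fintype ι] [DecidableEq ι]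
    {A : Matrix ι ι ℤ} (hA : A.det ≠ 0) :
    A.mulVecLin.toAddMonoidHom.range.index = A.det.natAbs := by
  change Nat.card ((ι → ℤ) ⧸ LinearMap.range A.mulVecLin) = _
  rw [← Submodule.natAbs_det_equiv _
    (LinearEquiv.ofInjective _ (A.mulVec_injective_of_det_ne_zero hA)), ← LinearMap.det_toLin']
  rfl

theorem QuotientAddGroup.mk_eq_mk_range_iff {M N : Type*} [AddGroup M] [AddCommGroup N]
    {ψ : M →+ N} {w x : N} : (w : N ⧸ ψ.range) = x ↔ ∃ u, ψ u + w = x := by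
  rw [QuotientAddGroup.eq, AddMonoidHom.mem_range]
  exact exists_congr fun u => by rw [eq_neg_add_iff_add_eq, add_comm]

namespace TropStmt

section Pushforward

variable {M N : Type}

def pushforward (ψ : M → N) (f : TPoly M) : TPoly N :=
  fun v => if h : ∃ u, ψ u = v then f h.choose else ⊤

theorem pushforward_apply_map {ψ : M → N} (hψ : Function.Injective ψ) (f : TPoly M) (u : M) :
    pushforward ψ f (ψ u) = f u := by
  have h : ∃ t, ψ t = ψ u := ⟨u, rfl⟩
  rw [pushforward, dif_pos h, hψ h.choose_spec]

theorem pushforward_apply_of_notMem {ψ : M → N} (f : TPoly M) {v : N}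
    (hv : v ∉ Set.range ψ) : pushforward ψ f v = ⊤ :=
  dif_neg hv

end Pushforward

section Group

variable {M : Type} [AddCommGroup M]

theorem tmulTerm_apply (c : TR) (v x : M) (f : TPoly M) : tmulTerm c v f x = c + f (x - v) := by
  have h : ∃ t, t + v = x := ⟨x - v, sub_add_cancel x v⟩
  rw [tmulTerm, dif_pos h, eq_sub_of_add_eq h.choose_spec]

theorem IsTIdeal.shift_mem {I : Set (TPoly M)} (hI : IsTIdeal I) {f : TPoly M} (hf : f ∈ I)
    (v : M) : (fun u => f (u + v)) ∈ I := by
  convert hI.2.2.2 f hf 0 (-v) using 1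
  ext u
  rw [tmulTerm_apply, zero_add, sub_neg_eq_add]

-- `tadd` is `⊓` and `zeroPoly` is `⊤` for the pointwise order on `TPoly M`.
theorem IsTIdeal.finset_inf_mem {I : Set (TPoly M)} (hI : IsTIdeal I) {ι : Type*}
    (s : Finset ι) {F : ι → TPoly M} (hF : ∀ i ∈ s, F i ∈ I) : s.inf F ∈ I :=
  Finset.inf_induction hI.2.1 (fun _ h₁ _ h₂ => hI.2.2.1 _ h₁ _ h₂) hF

end Group

section CosetExtension

variable {M N : Type} [AddCommGroup M] [AddCommGroup N] (ψ : M →+ N)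

def pushforwardAt (w : N) (f : TPoly M) : TPoly N := tmulTerm 0 w (pushforward ψ f)

def restrictCoset (g : TPoly N) (w : N) : TPoly M := fun u => g (ψ u + w)

def cosetExtension (J : Set (TPoly M)) : Set (TPoly N) := {g | ∀ w, restrictCoset ψ g w ∈ J}

theorem psupp_subset_iUnion_cosets (g : TPoly N) :
    psupp g ⊆ ⋃ q : N ⧸ ψ.range,
      (fun u => ψ u + q.out) '' psupp (restrictCoset ψ g q.out) := by
  intro x hx
  set q : N ⧸ ψ.range := QuotientAddGroup.mk x
  obtain ⟨u, hu⟩ := QuotientAddGroup.mk_eq_mk_range_iff.1 (QuotientAddGroup.out_eq' q)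
  refine Set.mem_iUnion.2 ⟨q, u, ?_, hu⟩
  show g (ψ u + q.out) ≠ ⊤
  rwa [hu]

variable {ψ}

theorem pushforwardAt_apply_map_add (hψ : Function.Injective ψ) (w : N) (f : TPoly M) (u : M) :
    pushforwardAt ψ w f (ψ u + w) = f u := by
  rw [pushforwardAt, tmulTerm_apply, add_sub_cancel_right, pushforward_apply_map hψ, zero_add]

theorem pushforwardAt_apply_of_sub_notMem {w x : N} (f : TPoly M) (hx : x - w ∉ ψ.range) :
    pushforwardAt ψ w f x = ⊤ := by
  rw [pushforwardAt, tmulTerm_apply, pushforward_apply_of_notMem f hx]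
  rfl

theorem restrictCoset_map_add (g : TPoly N) (v : M) (w : N) :
    restrictCoset ψ g (ψ v + w) = fun u => restrictCoset ψ g w (u + v) := by
  ext u
  simp only [restrictCoset, map_add, add_assoc]

theorem restrictCoset_pushforward_of_notMem (f : TPoly M) {w : N} (hw : w ∉ ψ.range) :
    restrictCoset ψ (pushforward ψ f) w = zeroPoly M := by
  ext u
  refine pushforward_apply_of_notMem f fun ⟨t, ht⟩ => hw ⟨t - u, ?_⟩
  rw [map_sub, ht, add_sub_cancel_left]

theorem restrictCoset_tmulTerm (c : TR) (v : N) (g : TPoly N) (w : N) :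
    restrictCoset ψ (tmulTerm c v g) w = tmulTerm c 0 (restrictCoset ψ g (w - v)) := by
  ext u
  simp only [restrictCoset, tmulTerm_apply, sub_zero, add_sub_assoc]

variable {J : Set (TPoly M)}

theorem pushforward_mem_cosetExtension (hψ : Function.Injective ψ) (hJ : IsTIdeal J)
    {f : TPoly M} (hf : f ∈ J) : pushforward ψ f ∈ cosetExtension ψ J := by
  intro w
  by_cases hw : w ∈ ψ.range
  · obtain ⟨v, rfl⟩ := hw
    have h0 : restrictCoset ψ (pushforward ψ f) 0 = f :=
      funext fun u => by rw [restrictCoset, add_zero, pushforward_apply_map hψ]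
    rw [← add_zero (ψ v), restrictCoset_map_add, h0]
    exact hJ.shift_mem hf v
  · rw [restrictCoset_pushforward_of_notMem f hw]
    exact hJ.2.1

theorem tmulTerm_mem_cosetExtension (hJ : IsTIdeal J) {g : TPoly N}
    (hg : g ∈ cosetExtension ψ J) (c : TR) (v : N) : tmulTerm c v g ∈ cosetExtension ψ J :=
  fun w => by
    rw [restrictCoset_tmulTerm]
    exact hJ.2.2.2 _ (hg (w - v)) c 0

theorem pushforwardAt_mem_cosetExtension (hψ : Function.Injective ψ) (hJ : IsTIdeal J)
    {f : TPoly M} (hf : f ∈ J) (w : N) : pushforwardAt ψ w f ∈ cosetExtension ψ J :=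
  tmulTerm_mem_cosetExtension hJ (pushforward_mem_cosetExtension hψ hJ hf) 0 w

theorem zeroPoly_mem_cosetExtension (hJ : IsTIdeal J) : zeroPoly N ∈ cosetExtension ψ J :=
  fun _ => hJ.2.1

theorem tadd_mem_cosetExtension (hJ : IsTIdeal J) {f g : TPoly N}
    (hf : f ∈ cosetExtension ψ J) (hg : g ∈ cosetExtension ψ J) :
    tadd f g ∈ cosetExtension ψ J :=
  fun w => hJ.2.2.1 _ (hf w) _ (hg w)

theorem psupp_finite_of_mem_cosetExtension [Finite (N ⧸ ψ.range)]
    (hJ : ∀ f ∈ J, (psupp f).Finite) {g : TPoly N} (hg : g ∈ cosetExtension ψ J) :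
    (psupp g).Finite := by
  refine Set.Finite.subset (Set.finite_iUnion fun q => ?_) (psupp_subset_iUnion_cosets ψ g)
  exact (hJ _ (hg q.out)).image _

theorem cosetExtension_isTIdeal [Finite (N ⧸ ψ.range)] (hJ : IsTIdeal J) :
    IsTIdeal (cosetExtension ψ J) :=
  ⟨fun _ => psupp_finite_of_mem_cosetExtension hJ.1, zeroPoly_mem_cosetExtension hJ,
    fun _ hf _ hg => tadd_mem_cosetExtension hJ hf hg,
    fun _ hg => tmulTerm_mem_cosetExtension hJ hg⟩

theorem le_pushforwardAt_restrictCoset (hψ : Function.Injective ψ) (g : TPoly N) (w : N) :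
    g ≤ pushforwardAt ψ w (restrictCoset ψ g w) := by
  intro x
  by_cases hx : x - w ∈ ψ.range
  · obtain ⟨u, hu⟩ := hx
    rw [← sub_add_cancel x w, ← hu, pushforwardAt_apply_map_add hψ]
    rfl
  · rw [pushforwardAt_apply_of_sub_notMem _ hx]
    exact le_top

theorem finset_inf_pushforwardAt_restrictCoset (hψ : Function.Injective ψ) {g : TPoly N}
    (hg : (psupp g).Finite) :
    hg.toFinset.inf (fun w => pushforwardAt ψ w (restrictCoset ψ g w)) = g := by
  refine le_antisymm (fun x => ?_) (Finset.le_inf fun w _ => le_pushforwardAt_restrictCoset hψ g w)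
  by_cases hx : g x = ⊤
  · rw [hx]
    exact le_top
  · calc _ ≤ pushforwardAt ψ x (restrictCoset ψ g x) x :=
          Finset.inf_le (f := fun w => pushforwardAt ψ w (restrictCoset ψ g w))
            (hg.mem_toFinset.2 hx) x
      _ = g x := by
          simpa [restrictCoset] using pushforwardAt_apply_map_add hψ x (restrictCoset ψ g x) 0

theorem idealGen_image_pushforward [Finite (N ⧸ ψ.range)] (hψ : Function.Injective ψ)
    (hJ : IsTIdeal J) : idealGen (pushforward ψ '' J) = cosetExtension ψ J := by
  refine subset_antisymm (Set.sInter_subset_of_mem ⟨cosetExtension_isTIdeal hJ, ?_⟩) ?_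
  · rintro _ ⟨f, hf, rfl⟩
    exact pushforward_mem_cosetExtension hψ hJ hf
  · rintro g hg I ⟨hI, hJI⟩
    rw [← finset_inf_pushforwardAt_restrictCoset hψ (psupp_finite_of_mem_cosetExtension hJ.1 hg)]
    exact hI.finset_inf_mem _ fun w _ => hI.2.2.2 _ (hJI ⟨_, hg w, rfl⟩) 0 w

theorem cosetExtension_elim (hψ : Function.Injective ψ) (hJ : IsTropIdeal J) {f g : TPoly N}
    (hf : f ∈ cosetExtension ψ J) (hg : g ∈ cosetExtension ψ J) {u : N} (hfg : f u = g u)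
    (hu : f u ≠ ⊤) : ∃ h ∈ cosetExtension ψ J, Elim h f g u := by
  obtain ⟨h₀, hh₀, hE⟩ := hJ.2 _ (hf u) _ (hg u) 0 (by simpa [restrictCoset] using hfg)
    (by simpa [restrictCoset] using hu)
  -- On the coset `u + ψ M` take the elimination performed in `J`, elsewhere `f ⊕ g`.
  let H : TPoly N := fun x => if x - u ∈ ψ.range then pushforward ψ h₀ (x - u) else tadd f g x
  have H_coset : ∀ t, H (ψ t + u) = h₀ t := fun t => by
    simp only [H, add_sub_cancel_right, pushforward_apply_map hψ]
    exact if_pos ⟨t, rfl⟩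
  have H_off : ∀ x, x - u ∉ ψ.range → H x = tadd f g x := fun x hx => if_neg hx
  refine ⟨H, fun w => ?_, by simpa using (H_coset 0).trans hE.1, fun v => ?_⟩
  · by_cases hw : w - u ∈ ψ.range
    · obtain ⟨v, hv⟩ := hw
      have hHw : restrictCoset ψ H w = fun t => h₀ (t + v) := funext fun t => by
        rw [restrictCoset, ← H_coset, map_add, hv, add_assoc, sub_add_cancel]
      rw [hHw]
      exact hJ.1.shift_mem hh₀ v
    · have hHw : restrictCoset ψ H w = tadd (restrictCoset ψ f w) (restrictCoset ψ g w) :=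
        funext fun t => H_off _ fun ⟨s, hs⟩ => hw ⟨s - t, by rw [map_sub, hs]; abel⟩
      rw [hHw]
      exact hJ.1.2.2.1 _ (hf w) _ (hg w)
  · by_cases hv : v - u ∈ ψ.range
    · obtain ⟨t, ht⟩ := hv
      rw [← sub_add_cancel v u, ← ht, H_coset]
      exact hE.2 t
    · rw [H_off v hv]
      exact ⟨le_rfl, fun _ => rfl⟩

theorem cosetExtension_isTropIdeal [Finite (N ⧸ ψ.range)] (hψ : Function.Injective ψ)
    (hJ : IsTropIdeal J) : IsTropIdeal (cosetExtension ψ J) :=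
  ⟨cosetExtension_isTIdeal hJ.1, fun _ hf _ hg _ => cosetExtension_elim hψ hJ hf hg⟩

def slice (hψ : Function.Injective ψ) (E : Finset N) (w : N) : Finset M :=
  E.preimage (fun u => ψ u + w) ((add_left_injective w).comp hψ).injOn

theorem mem_slice {hψ : Function.Injective ψ} {E : Finset N} {w : N} {u : M} :
    u ∈ slice hψ E w ↔ ψ u + w ∈ E :=
  Finset.mem_preimage

theorem card_eq_sum_card_slice (hψ : Function.Injective ψ) [Fintype (N ⧸ ψ.range)]
    (E : Finset N) : E.card = ∑ q : N ⧸ ψ.range, (slice hψ E q.out).card := by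
  rw [Finset.card_eq_sum_card_fiberwise (f := ((↑) : N → N ⧸ ψ.range))
    (t := Finset.univ) fun _ _ => Finset.mem_coe.2 (Finset.mem_univ _)]
  refine Finset.sum_congr rfl fun q _ => ?_
  rw [slice, Finset.card_preimage]
  congr 1
  ext x
  rw [Finset.mem_filter, Finset.mem_filter, Set.mem_range,
    ← QuotientAddGroup.mk_eq_mk_range_iff, QuotientAddGroup.out_eq', eq_comm]

end CosetExtension

section Degree

variable {m n : ℕ} {ψ : (Fin m → ℤ) →+ (Fin n → ℤ)} {J : Set (TPoly (Fin m → ℤ))}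

theorem lindepFinset_slice (hψ : Function.Injective ψ) (hJ : IsTIdeal J) {E : Finset (Fin n → ℤ)}
    (hE : LindepFinset (cosetExtension ψ J) E) (w : Fin n → ℤ) :
    LindepFinset J (slice hψ E w) := by
  rintro f hf ⟨u₀, hu₀⟩ hsub
  refine hE _ (pushforwardAt_mem_cosetExtension hψ hJ hf w)
    ⟨ψ u₀ + w, by rwa [pushforwardAt_apply_map_add hψ]⟩ fun x hx => ?_
  by_cases hxw : x - w ∈ ψ.range
  · obtain ⟨u, hu⟩ := hxw
    rw [← sub_add_cancel x w, ← hu] at hx ⊢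
    replace hx : pushforwardAt ψ w f (ψ u + w) ≠ ⊤ := hx
    rw [pushforwardAt_apply_map_add hψ] at hx
    exact mem_slice.1 (hsub hx)
  · exact absurd (pushforwardAt_apply_of_sub_notMem f hxw) hx

theorem lindepFinset_cosetExtension_of_slice (hψ : Function.Injective ψ)
    {E : Finset (Fin n → ℤ)} (hE : ∀ q : (Fin n → ℤ) ⧸ ψ.range, LindepFinset J (slice hψ E q.out)) :
    LindepFinset (cosetExtension ψ J) E := by
  rintro g hg ⟨x, hx⟩ hsub
  set q : (Fin n → ℤ) ⧸ ψ.range := QuotientAddGroup.mk x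
  obtain ⟨u, hu⟩ := QuotientAddGroup.mk_eq_mk_range_iff.1 (QuotientAddGroup.out_eq' q)
  exact hE q _ (hg _) ⟨u, show g (ψ u + q.out) ≠ ⊤ by rwa [hu]⟩ fun t ht => mem_slice.2 (hsub ht)

variable [Fintype ((Fin n → ℤ) ⧸ ψ.range)]

theorem card_le_of_lindepFinset_cosetExtension (hψ : Function.Injective ψ) (hJ : IsTIdeal J)
    {B : ℕ} (hB : ∀ E, LindepFinset J E → E.card ≤ B) {E : Finset (Fin n → ℤ)}
    (hE : LindepFinset (cosetExtension ψ J) E) : E.card ≤ ψ.range.index * B :=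
  calc E.card = ∑ q : (Fin n → ℤ) ⧸ ψ.range, (slice hψ E q.out).card :=
        card_eq_sum_card_slice hψ E
    _ ≤ ∑ _q : (Fin n → ℤ) ⧸ ψ.range, B :=
        Finset.sum_le_sum fun q _ => hB _ (lindepFinset_slice hψ hJ hE q.out)
    _ = ψ.range.index * B := by
        rw [Finset.sum_const, Finset.card_univ, smul_eq_mul, AddSubgroup.index_eq_card,
          Nat.card_eq_fintype_card]

theorem exists_lindepFinset_cosetExtension (hψ : Function.Injective ψ)
    {EJ : Finset (Fin m → ℤ)} (hEJ : LindepFinset J EJ) :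
    ∃ E, LindepFinset (cosetExtension ψ J) E ∧ E.card = ψ.range.index * EJ.card := by
  let E := Finset.univ.biUnion fun q : (Fin n → ℤ) ⧸ ψ.range => EJ.image (ψ · + q.out)
  have hslice : ∀ q : (Fin n → ℤ) ⧸ ψ.range, slice hψ E q.out = EJ := by
    intro q
    ext u
    simp only [mem_slice, E, Finset.mem_biUnion, Finset.mem_image, Finset.mem_univ, true_and]
    constructor
    · rintro ⟨q', e, he, heq⟩
      obtain rfl : q' = q := by
        rw [← QuotientAddGroup.out_eq' q', ← QuotientAddGroup.out_eq' q]
        exact (QuotientAddGroup.mk_eq_mk_range_iff.2 ⟨e - u, by rw [map_sub, sub_add_eq_add_sub, heq, add_sub_cancel_left]⟩)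
      rwa [← hψ (add_right_cancel heq)]
    · exact fun hu => ⟨q, u, hu, rfl⟩
  refine ⟨E, lindepFinset_cosetExtension_of_slice hψ fun q => (hslice q).symm ▸ hEJ, ?_⟩
  rw [card_eq_sum_card_slice hψ, Finset.sum_congr rfl fun q _ => congrArg Finset.card (hslice q),
    Finset.sum_const, Finset.card_univ, smul_eq_mul, AddSubgroup.index_eq_card,
    Nat.card_eq_fintype_card]

theorem ldegIs_cosetExtension (hψ : Function.Injective ψ) (hJ : IsTIdeal J) {d : ℕ}
    (hd : LdegIs J d) : LdegIs (cosetExtension ψ J) (ψ.range.index * d) := by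
  obtain ⟨⟨EJ, hEJ, rfl⟩, hmax⟩ := hd
  exact ⟨exists_lindepFinset_cosetExtension hψ hEJ, fun E hE =>
    card_le_of_lindepFinset_cosetExtension hψ hJ hmax hE⟩

theorem isZeroDimL_cosetExtension (hψ : Function.Injective ψ) (hJ : IsTIdeal J)
    (hz : IsZeroDimL J) : IsZeroDimL (cosetExtension ψ J) :=
  let ⟨B, hB⟩ := hz
  ⟨ψ.range.index * B, fun _ hE => card_le_of_lindepFinset_cosetExtension hψ hJ hB hE⟩

end Degree

end TropStmt

theorem monomial_map_image_isTropicalIdeal_and_degree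
    (n : ℕ) (A : Matrix (Fin n) (Fin n) ℤ) (hA : A.det ≠ 0)
    (J : Set (TropStmt.TPoly (Fin n → ℤ))) (hJ : TropStmt.IsTropIdeal J)
    (hz : TropStmt.IsZeroDimL J) :
    TropStmt.IsTropIdeal (TropStmt.idealGen (TropStmt.phiMap A '' J)) ∧
    TropStmt.IsZeroDimL (TropStmt.idealGen (TropStmt.phiMap A '' J)) ∧
    ∀ dJ : ℕ, TropStmt.LdegIs J dJ →
      TropStmt.LdegIs (TropStmt.idealGen (TropStmt.phiMap A '' J)) (A.det.natAbs * dJ) := by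
  open TropStmt in
  let ψ := A.mulVecLin.toAddMonoidHom
  have hψ : Function.Injective ψ := A.mulVec_injective_of_det_ne_zero hA
  have hindex : ψ.range.index = A.det.natAbs := A.index_range_mulVecLin hA
  have : ψ.range.FiniteIndex := ⟨hindex ▸ Int.natAbs_ne_zero.2 hA⟩
  have := Fintype.ofFinite ((Fin n → ℤ) ⧸ ψ.range)
  have hphi : phiMap A = pushforward ψ := rfl
  rw [hphi, idealGen_image_pushforward hψ hJ.1, ← hindex]
  exact ⟨cosetExtension_isTropIdeal hψ hJ, isZeroDimL_cosetExtension hψ hJ.1 hz,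
    fun _ => ldegIs_cosetExtension hψ hJ.1⟩
end
end
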